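/- Geodesic midpoint property: with μ_t the interpolated graphs along an optimal alignment of G0 and G1, the midpoint μ_{1/2} satisfies d_SGA(μ_0, μ_{1/2}) ≤ (1/2) d_SGA(μ_0, μ_1) and d_SGA(μ_{1/2}, μ_1) ≤ (1/2) d_SGA(μ_0, μ_1). -/

import Mathlib

/-! Transport every vertex along the optimal alignment `σ`. Both the features and the
structure distances then move on straight lines at constant speed, so aligning `μ_s` with
`μ_t` by the identity costs exactly `|s - t|` times the optimal cost of `σ`; the discrepancy
`d_SGA(μ_s, μ_t)`, an infimum over alignments, is at most that. -/

open scoped BigOperators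

/-- Cost of aligning structured graphs given by features in Euclidean space and
structure-distance matrices, via permutation `σ`. -/
noncomputable def alignCostM {M d : ℕ}
    (f1 : Fin M → EuclideanSpace ℝ (Fin d)) (D1 : Fin M → Fin M → ℝ)
    (f2 : Fin M → EuclideanSpace ℝ (Fin d)) (D2 : Fin M → Fin M → ℝ)
    (σ : Equiv.Perm (Fin M)) : ℝ :=
  (∑ i, dist (f1 i) (f2 (σ i))) + ∑ i, ∑ k, |D1 i k - D2 (σ i) (σ k)|

/-- Second-order graph alignment discrepancy (matrix form). -/
noncomputable def dSGAM {M d : ℕ}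
    (f1 : Fin M → EuclideanSpace ℝ (Fin d)) (D1 : Fin M → Fin M → ℝ)
    (f2 : Fin M → EuclideanSpace ℝ (Fin d)) (D2 : Fin M → Fin M → ℝ) : ℝ :=
  ⨅ σ : Equiv.Perm (Fin M), alignCostM f1 D1 f2 D2 σ

lemma dSGAM_le_alignCostM {M d : ℕ}
    (f1 : Fin M → EuclideanSpace ℝ (Fin d)) (D1 : Fin M → Fin M → ℝ)
    (f2 : Fin M → EuclideanSpace ℝ (Fin d)) (D2 : Fin M → Fin M → ℝ)
    (σ : Equiv.Perm (Fin M)) :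
    dSGAM f1 D1 f2 D2 ≤ alignCostM f1 D1 f2 D2 σ :=
  ciInf_le (Set.finite_range _).bddBelow σ

lemma dist_convexCombination_convexCombination {E : Type*} [SeminormedAddCommGroup E]
    [NormedSpace ℝ E] (a b : E) (s t : ℝ) :
    dist ((1 - s) • a + s • b) ((1 - t) • a + t • b) = dist s t * dist a b := by
  simpa only [AffineMap.lineMap_apply_module] using dist_lineMap_lineMap a b s t

section Interpolation

variable {M d : ℕ} {f0 f1 : Fin M → EuclideanSpace ℝ (Fin d)} {D0 D1 : Fin M → Fin M → ℝ}
  {σ : Equiv.Perm (Fin M)} {μf : ℝ → Fin M → EuclideanSpace ℝ (Fin d)}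
  {μD : ℝ → Fin M → Fin M → ℝ}

lemma alignCostM_interpolation_one
    (hμf : ∀ t i, μf t i = (1 - t) • f0 i + t • f1 (σ i))
    (hμD : ∀ t i k, μD t i k = (1 - t) * D0 i k + t * D1 (σ i) (σ k)) (s t : ℝ) :
    alignCostM (μf s) (μD s) (μf t) (μD t) 1 = dist s t * alignCostM f0 D0 f1 D1 σ := by
  have hD : ∀ i k, |μD s i k - μD t i k| = dist s t * |D0 i k - D1 (σ i) (σ k)| := by
    intro i k
    simpa only [hμD, smul_eq_mul, Real.dist_eq] using
      dist_convexCombination_convexCombination (D0 i k) (D1 (σ i) (σ k)) s t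
  simp only [alignCostM, Equiv.Perm.coe_one, id_eq, hμf, dist_convexCombination_convexCombination,
    hD, mul_add, Finset.mul_sum]

lemma dSGAM_interpolation_le
    (hopt : alignCostM f0 D0 f1 D1 σ = dSGAM f0 D0 f1 D1)
    (hμf : ∀ t i, μf t i = (1 - t) • f0 i + t • f1 (σ i))
    (hμD : ∀ t i k, μD t i k = (1 - t) * D0 i k + t * D1 (σ i) (σ k)) (s t : ℝ) :
    dSGAM (μf s) (μD s) (μf t) (μD t) ≤ dist s t * dSGAM f0 D0 f1 D1 := by
  rw [← hopt, ← alignCostM_interpolation_one hμf hμD]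
  exact dSGAM_le_alignCostM _ _ _ _ 1

end Interpolation

/-- the midpoint of the interpolated path is a metric midpoint up to
a factor 1/2 on each side. -/
theorem dSGA_midpoint {M d : ℕ} {S0 S1 : Type*} [MetricSpace S0] [MetricSpace S1]
    (f0 f1 : Fin M → EuclideanSpace ℝ (Fin d))
    (s0 : Fin M → S0) (s1 : Fin M → S1)
    (σ : Equiv.Perm (Fin M))
    (hopt : alignCostM f0 (fun i k => dist (s0 i) (s0 k))
        f1 (fun i k => dist (s1 i) (s1 k)) σ
      = dSGAM f0 (fun i k => dist (s0 i) (s0 k)) f1 (fun i k => dist (s1 i) (s1 k)))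
    (μf : ℝ → Fin M → EuclideanSpace ℝ (Fin d))
    (μD : ℝ → Fin M → Fin M → ℝ)
    (hμf : ∀ t i, μf t i = (1 - t) • f0 i + t • f1 (σ i))
    (hμD : ∀ t i k,
      μD t i k = (1 - t) * dist (s0 i) (s0 k) + t * dist (s1 (σ i)) (s1 (σ k))) :
    dSGAM (μf 0) (μD 0) (μf (1/2)) (μD (1/2))
        ≤ (1/2) *
          dSGAM f0 (fun i k => dist (s0 i) (s0 k)) f1 (fun i k => dist (s1 i) (s1 k))
      ∧ dSGAM (μf (1/2)) (μD (1/2)) (μf 1) (μD 1)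
        ≤ (1/2) *
          dSGAM f0 (fun i k => dist (s0 i) (s0 k)) f1 (fun i k => dist (s1 i) (s1 k)) := by
  have hle := dSGAM_interpolation_le (D0 := fun i k => dist (s0 i) (s0 k))
    (D1 := fun i k => dist (s1 i) (s1 k)) hopt hμf hμD
  have h0 : dist (0 : ℝ) (1/2) = 1/2 := by norm_num [Real.dist_eq]
  have h1 : dist (1/2 : ℝ) 1 = 1/2 := by norm_num [Real.dist_eq]
  constructor
  · simpa only [h0] using hle 0 (1/2)
  · simpa only [h1] using hle (1/2) 1
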